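/- Let 0 < a < 1 and define f : ℂ² → ℂ² by f(z, w) = (z² + a w, a z). If (z, w) ∈ ℂ² satisfies |z| > 3 and |z| > |w|, then the image (z′, w′) = f(z, w) satisfies |z′| > 3 and |z′| > |w′|, and moreover ‖f(z, w)‖ ≥ ‖(z, w)‖ + 1, where ‖·‖ is the Euclidean norm on ℂ². -/

import Mathlib

/-! On `|w| < |z|` the quadratic term dominates: `|z'| ≥ |z|² - a|w| > |z|² - |z|`, while
`‖(z, w)‖ ≤ √2 |z|` and `|w'| = a|z| < |z|`. For `|z| > 3` the quantity `|z|² - |z|` exceeds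
`3`, `|z|` and `√2 |z| + 1` at once. -/

open Filter Metric Set
open scoped ENNReal

noncomputable section

/-- `ℂ²` with the Euclidean norm. -/
abbrev E2 := EuclideanSpace ℂ (Fin 2)

/-- The map `f(z, w) = (z² + a w, a z)` on `ℂ²`. -/
def henon (a : ℂ) (p : E2) : E2 :=
  (WithLp.equiv 2 (Fin 2 → ℂ)).symm ![(p 0) ^ 2 + a * p 1, a * p 0]

@[simp]
lemma henon_apply_zero (a : ℂ) (p : E2) : henon a p 0 = p 0 ^ 2 + a * p 1 := rfl

@[simp]
lemma henon_apply_one (a : ℂ) (p : E2) : henon a p 1 = a * p 0 := rfl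

lemma norm_sq_sub_norm_lt_norm_sq_add_mul {𝕜 : Type*} [NormedDivisionRing 𝕜] {z w c : 𝕜}
    (hc : ‖c‖ ≤ 1) (hw : ‖w‖ < ‖z‖) : ‖z‖ ^ 2 - ‖z‖ < ‖z ^ 2 + c * w‖ := by
  have hcw : ‖c * w‖ < ‖z‖ := by
    rw [norm_mul]
    exact (mul_le_of_le_one_left (norm_nonneg w) hc).trans_lt hw
  calc ‖z‖ ^ 2 - ‖z‖ < ‖z ^ 2‖ - ‖c * w‖ := by rw [norm_pow]; linarith
    _ ≤ ‖z ^ 2 + c * w‖ := norm_sub_le_norm_add _ _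

lemma EuclideanSpace.norm_le_sqrt_two_mul_norm_zero {𝕜 : Type*} [RCLike 𝕜]
    (q : EuclideanSpace 𝕜 (Fin 2)) (h : ‖q 1‖ ≤ ‖q 0‖) : ‖q‖ ≤ √2 * ‖q 0‖ := by
  rw [EuclideanSpace.norm_eq, Fin.sum_univ_two, Real.sqrt_le_left (by positivity), mul_pow,
    Real.sq_sqrt zero_le_two]
  nlinarith [norm_nonneg (q 1)]

/-- for `0 < a < 1` and `f(z,w) = (z² + aw, az)`, if `|z| > 3` and
`|z| > |w|`, then the image `(z', w') = f(z, w)` satisfies `|z'| > 3`, `|z'| > |w'|`,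
and `‖f(z,w)‖ ≥ ‖(z,w)‖ + 1`. -/
theorem henon_filtration_estimate (a : ℝ) (ha0 : 0 < a) (ha1 : a < 1)
    (p : E2) (hz : 3 < ‖p 0‖) (hzw : ‖p 1‖ < ‖p 0‖) :
    3 < ‖henon (a : ℂ) p 0‖ ∧
      ‖henon (a : ℂ) p 1‖ < ‖henon (a : ℂ) p 0‖ ∧
      ‖p‖ + 1 ≤ ‖henon (a : ℂ) p‖ := by
  have ha : ‖(a : ℂ)‖ = a := by simp [ha0.le]
  set r := ‖p 0‖
  have hfst : r ^ 2 - r < ‖henon a p 0‖ := by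
    rw [henon_apply_zero]
    exact norm_sq_sub_norm_lt_norm_sq_add_mul (ha.trans_le ha1.le) hzw
  have hsnd : ‖henon a p 1‖ < r := by
    rw [henon_apply_one, norm_mul, ha]
    exact mul_lt_of_lt_one_left (by linarith) ha1
  refine ⟨by nlinarith, by nlinarith, ?_⟩
  calc ‖p‖ + 1 ≤ √2 * r + 1 := by
        gcongr
        exact EuclideanSpace.norm_le_sqrt_two_mul_norm_zero p hzw.le
    _ ≤ r ^ 2 - r := by nlinarith [Real.sqrt_two_lt_three_halves]
    _ ≤ ‖henon a p 0‖ := hfst.le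
    _ ≤ ‖henon a p‖ := PiLp.norm_apply_le _ _

end
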